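/- (The 2-hooked construction.) Let a, b, c ∈ ℤ/mℤ with a, b ≠ 0, let S' ⊆ ℤ/mℤ with 0 ∈ S' and c ∉ S', and let G = B(m;{a,−a}, S' ∪ {c}, {b,−b}) be connected with gcd(m, S' ∪ {c}) > 1 and gcd(m, {a} ∪ S' ∪ {b}) > 1. Let G' = B(m;{a,−a}, S', {b,−b}) and let K be the connected component of the vertex u₀ in G'. Assume that the subgraph induced on K has a Hamiltonian cycle containing at least one outer edge and at least one inner edge, and that it has either a Hamiltonian path from u₀ to u_b or a Hamiltonian path from v₀ to v_a. Then G has a Hamiltonian cycle. -/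

import Mathlib

/-- The bicirculant graph `B(m; R, S, T)` on vertex set `ZMod m × Bool`:
`(i, false)` is the outer vertex `u_i`, `(i, true)` is the inner vertex `v_i`.
Edges: `u_i u_{i+j}` for `j ∈ R`, `v_i v_{i+j}` for `j ∈ T`, `u_i v_{i+j}` for `j ∈ S`. -/
def bicirculant (m : ℕ) (R S T : Finset (ZMod m)) : SimpleGraph (ZMod m × Bool) :=
  SimpleGraph.fromRel (fun x y =>
    (x.2 = false ∧ y.2 = false ∧ y.1 - x.1 ∈ R) ∨
    (x.2 = true ∧ y.2 = true ∧ y.1 - x.1 ∈ T) ∨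
    (x.2 = false ∧ y.2 = true ∧ y.1 - x.1 ∈ S))

/-- `gcd(m, X)`: the gcd of `m` together with the natural-number representatives
(in `{0, …, m-1}`) of the elements of `X`. -/
def gcdSet (m : ℕ) (X : Finset (ZMod m)) : ℕ :=
  Nat.gcd m (X.gcd ZMod.val)

/-- Every subset of a finite vertex type is a finite type (so that induced subgraphs on
vertex subsets can be said to be hamiltonian). -/
noncomputable instance bicircSubsetFintype {V : Type*} [Fintype V] (s : Set V) : Fintype s :=
  Fintype.ofFinite _

/-!
Let `W` be the subgroup generated by `{a, b} ∪ S'`. The component `K` consists of the vertices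
with index in `W`, and since `G` is connected, `ZMod m ⧸ W` is cyclic, generated by the class of
`c`; its elements `j • c` index the layers of `G`, and the new spokes of step `c` join consecutive
layers. Open the Hamiltonian cycle of `K` at an inner edge `v_x v_x'`, so that `x' - x = ±b`, and
join its ends by spokes to the ends of a translate of the Hamiltonian path `u₀ … u_b` lying in the
next layer. That path begins and ends on the outer side and visits as many outer as inner
vertices, so it contains an inner edge, and the result is again a path whose ends are joined by an
inner edge, now in the new layer. After all layers have been added, the path closes up to a
Hamiltonian cycle of `G`. A Hamiltonian path `v₀ … v_a` is used in the same way with the two sides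
exchanged, starting from an outer edge of the cycle.
-/

open SimpleGraph

namespace List

variable {α : Type*}

theorem countP_le_countP_not_of_isChain (p : α → Bool) :
    ∀ {l : List α}, l.IsChain (fun a b => ¬(p a ∧ p b)) → (∀ a ∈ l.getLast?, p a = false) →
      l.countP p ≤ l.countP (fun a => !p a)
  | [], _, _ => by simp
  | [a], _, hl => by simp_all
  | a :: b :: l, hc, hl => by
    by_cases ha : p a
    · have hb : p b = false := by simpa [ha] using hc.rel
      have ih := countP_le_countP_not_of_isChain p hc.of_cons.of_cons (by cases l <;> simp_all)
      simp only [countP_cons_of_pos, countP_cons_of_neg, ha, hb, Bool.not_true, Bool.not_false,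
        Bool.false_eq_true, not_false_eq_true] at ih ⊢
      omega
    · have ih := countP_le_countP_not_of_isChain p hc.of_cons (by simpa using hl)
      simp only [countP_cons_of_pos, countP_cons_of_neg, ha, Bool.not_false, Bool.false_eq_true,
        not_false_eq_true] at ih ⊢
      omega

/-- If no two consecutive entries satisfied `p`, the entries failing `p` would outnumber the
others, since both ends fail `p`. -/
theorem exists_eq_append_cons_cons_of_countP_not_le {p : α → Bool} {l : List α} {a b : α}
    (ha : l.head? = some a) (hpa : p a = false) (hb : l.getLast? = some b) (hpb : p b = false)
    (hcount : l.countP (fun a => !p a) ≤ l.countP p) :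
    ∃ l₁ x y l₂, l = l₁ ++ x :: y :: l₂ ∧ p x ∧ p y := by
  by_contra! h
  have hc : l.IsChain (fun a b => ¬(p a ∧ p b)) :=
    isChain_iff_forall_rel_of_append_cons_cons.2 fun x y l₁ l₂ hl ⟨hx, hy⟩ => h l₁ x y l₂ hl hx hy
  obtain ⟨l', rfl⟩ : ∃ l', l = a :: l' := ⟨l.tail, by cases l <;> simp_all⟩
  have := countP_le_countP_not_of_isChain p hc.of_cons (by cases l' <;> simp_all)
  simp only [countP_cons_of_pos, countP_cons_of_neg, hpa, Bool.not_false, Bool.false_eq_true,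
    not_false_eq_true] at hcount
  omega

theorem Nodup.countP_snd_eq_countP_not_snd {L : List (α × Bool)} (hL : L.Nodup)
    (hflip : ∀ v : α × Bool, (v.1, !v.2) ∈ L ↔ v ∈ L) (f : Bool → Bool) :
    L.countP (fun v => f v.2) = L.countP (fun v => f !v.2) := by
  have hinv : Function.Involutive (Prod.map id not : α × Bool → α × Bool) :=
    fun v => Prod.ext rfl (Bool.not_not v.2)
  have hperm : (L.map (Prod.map id not)).Perm L :=
    (perm_ext_iff_of_nodup (hL.map hinv.injective) hL).2 fun v => by
      rw [mem_map_of_involutive hinv]; exact hflip v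
  rw [← hperm.countP_eq, countP_map]
  rfl

end List

namespace SimpleGraph

variable {V V' : Type*} {G : SimpleGraph V} {G' : SimpleGraph V'}

structure IsPathList (G : SimpleGraph V) (L : List V) (x y : V) : Prop where
  nodup : L.Nodup
  isChain : L.IsChain G.Adj
  head?_eq : L.head? = some x
  getLast?_eq : L.getLast? = some y

theorem Walk.IsPath.isPathList {x y : V} {p : G.Walk x y} (hp : p.IsPath) :
    G.IsPathList p.support x y where
  nodup := hp.support_nodup
  isChain := p.isChain_adj_support
  head?_eq := by rw [← p.cons_tail_support]; rfl
  getLast?_eq := by rw [List.getLast?_eq_some_getLast p.support_ne_nil, p.getLast_support]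

namespace IsPathList

variable {L L₁ L₂ : List V} {x y x' y' u v : V}

theorem reverse (h : G.IsPathList L x y) : G.IsPathList L.reverse y x where
  nodup := List.nodup_reverse.2 h.nodup
  isChain := List.isChain_reverse.2 (h.isChain.imp fun _ _ hab => hab.symm)
  head?_eq := by rw [List.head?_reverse, h.getLast?_eq]
  getLast?_eq := by rw [List.getLast?_reverse, h.head?_eq]

theorem map (h : G.IsPathList L x y) (f : G →g G') (hf : Function.Injective f) :
    G'.IsPathList (L.map f) (f x) (f y) where
  nodup := h.nodup.map hf
  isChain := (List.isChain_map f).2 (h.isChain.imp fun _ _ hab => f.map_adj hab)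
  head?_eq := by rw [List.head?_map, h.head?_eq]; rfl
  getLast?_eq := by rw [List.getLast?_map, h.getLast?_eq]; rfl

theorem append (h₁ : G.IsPathList L₁ x y) (h₂ : G.IsPathList L₂ x' y') (hadj : G.Adj y x')
    (hdisj : L₁.Disjoint L₂) : G.IsPathList (L₁ ++ L₂) x y' where
  nodup := List.nodup_append'.2 ⟨h₁.nodup, h₂.nodup, hdisj⟩
  isChain := List.isChain_append.2 ⟨h₁.isChain, h₂.isChain, by
    simp [h₁.getLast?_eq, h₂.head?_eq, hadj]⟩
  head?_eq := by simp [List.head?_append, h₁.head?_eq]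
  getLast?_eq := by simp [List.getLast?_append, h₂.getLast?_eq]

/-- A path whose ends are adjacent closes up to a cycle, which can be cut open anywhere. -/
theorem rotate (h : G.IsPathList (L₁ ++ L₂) x y) (hadj : G.Adj y x) (hu : L₁.getLast? = some u)
    (hv : L₂.head? = some v) : G.IsPathList (L₂ ++ L₁) v u := by
  have hL₁ : L₁.head? = some x := by
    have := h.head?_eq
    rw [List.head?_append] at this
    cases h₁ : L₁.head? <;> simp_all
  have hL₂ : L₂.getLast? = some y := by
    have := h.getLast?_eq
    rw [List.getLast?_append] at this
    cases h₂ : L₂.getLast? <;> simp_all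
  obtain ⟨hc₁, hc₂, -⟩ := List.isChain_append.1 h.isChain
  exact
    { nodup := List.nodup_append_comm.1 h.nodup
      isChain := List.isChain_append.2 ⟨hc₂, hc₁, by simp [hL₂, hL₁, hadj]⟩
      head?_eq := by simp [List.head?_append, hv]
      getLast?_eq := by simp [List.getLast?_append, hu] }

theorem exists_isHamiltonianCycle [Fintype V] [DecidableEq V] (h : G.IsPathList L x y)
    (hL : ∀ v, v ∈ L) (hadj : G.Adj y x) (hcard : 3 ≤ Fintype.card V) :
    ∃ a, ∃ p : G.Walk a a, p.IsHamiltonianCycle := by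
  have hne : L ≠ [] := fun h' => by simpa [h'] using h.head?_eq
  have hx : L.head hne = x := by simpa [List.head?_eq_some_head hne] using h.head?_eq
  have hy : L.getLast hne = y := by simpa [List.getLast?_eq_some_getLast hne] using h.getLast?_eq
  let p : G.Walk x y := (Walk.ofSupport L hne h.isChain).copy hx hy
  have hp : p.IsHamiltonian := by
    refine Walk.IsPath.isHamiltonian_of_mem ?_ fun v => by simpa [p] using hL v
    rw [Walk.isPath_def]
    simpa [p] using h.nodup
  have hlen := hp.length_eq
  refine ⟨y, Walk.cons hadj p, ?_⟩
  rw [Walk.isHamiltonianCycle_iff_isCycle_and_length_eq, Walk.isCycle_iff_isPath_tail_and_le_length]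
  simp only [Walk.tail_cons, Walk.length_cons]
  exact ⟨⟨by simpa using hp.isPath, by omega⟩, by omega⟩

/-- As `L` begins and ends on side `σ` and has as many vertices on each side, two consecutive
vertices of `L` lie on side `!σ`; `D` is the cycle through `C` and `L` opened between them. -/
theorem exists_splice {α : Type*} {Γ : SimpleGraph (α × Bool)} {σ : Bool}
    {C L : List (α × Bool)} {u u' w w' : α × Bool}
    (hC : Γ.IsPathList C u u') (hL : Γ.IsPathList L w' w) (hw' : w'.2 = σ) (hw : w.2 = σ)
    (hflip : ∀ v : α × Bool, (v.1, !v.2) ∈ L ↔ v ∈ L) (hdisj : C.Disjoint L)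
    (hu'w' : Γ.Adj u' w') (hwu : Γ.Adj w u) :
    ∃ D y y', Γ.IsPathList D (y, !σ) (y', !σ) ∧ Γ.Adj (y', !σ) (y, !σ) ∧ (y', !σ) ∈ L ∧
      ∀ v, v ∈ D ↔ v ∈ C ∨ v ∈ L := by
  have hcount : L.countP (fun v => !(v.2 == !σ)) ≤ L.countP (fun v => v.2 == !σ) := by
    refine le_of_eq ?_
    rw [hL.nodup.countP_snd_eq_countP_not_snd hflip (· == !σ)]
    exact List.countP_congr fun v _ => by cases v.2 <;> cases σ <;> rfl
  obtain ⟨L₁, ⟨q, _⟩, ⟨q', _⟩, L₂, rfl, hq, hq'⟩ :=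
    List.exists_eq_append_cons_cons_of_countP_not_le hL.head?_eq (by simp [hw'])
      hL.getLast?_eq (by simp [hw]) hcount
  simp only [beq_iff_eq] at hq hq'
  subst hq hq'
  have hCL := hC.append hL hu'w' hdisj
  rw [show C ++ (L₁ ++ (q, !σ) :: (q', !σ) :: L₂) = (C ++ L₁ ++ [(q, !σ)]) ++ ((q', !σ) :: L₂)
    by simp] at hCL
  exact ⟨_, q', q, hCL.rotate hwu (by simp) rfl,
    List.isChain_iff_forall_rel_of_append_cons_cons.1 hL.isChain rfl, by simp,
    fun v => by simp only [List.mem_append, List.mem_cons, List.not_mem_nil]; tauto⟩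

end IsPathList

namespace Walk

variable [DecidableEq V]

theorem IsHamiltonianCycle.exists_isHamiltonian_of_mem_darts {u : V} {c : G.Walk u u}
    (hc : c.IsHamiltonianCycle) {d : G.Dart} (hd : d ∈ c.darts) :
    ∃ p : G.Walk d.snd d.fst, p.IsHamiltonian := by
  have hfst : d.fst ∈ c.support := c.dart_fst_mem_support_of_mem_darts hd
  set c' := c.rotate d.fst hfst
  have hc' : c'.IsHamiltonianCycle := hc.rotate hfst
  have hd' : d ∈ c'.darts := (c.rotate_darts _ hfst).mem_iff.2 hd
  obtain ⟨w, h, r, hcr⟩ := Walk.not_nil_iff.1 hc'.isCycle.not_nil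
  rw [hcr] at hc' hd'
  -- distinct darts of a cycle start at distinct vertices, so `d` is the first dart of `c'`
  have hinj := List.inj_on_of_nodup_map
    ((map_fst_darts _).symm ▸ hc'.isCycle.nodup_dropLast_support)
  have hdw : d.snd = w := by
    rw [hinj hd' (y := ⟨(d.fst, w), h⟩) (by simp) rfl]
  refine ⟨r.copy hdw.symm rfl, ?_⟩
  simpa [Walk.IsHamiltonian] using hc'.isHamiltonian_tail

theorem IsHamiltonianCycle.exists_isHamiltonian_of_mem_edges {u y z : V} {c : G.Walk u u}
    (hc : c.IsHamiltonianCycle) (h : s(y, z) ∈ c.edges) : ∃ p : G.Walk z y, p.IsHamiltonian := by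
  obtain ⟨d, hd, hde⟩ := List.mem_map.1 h
  obtain ⟨p, hp⟩ := hc.exists_isHamiltonian_of_mem_darts hd
  rcases Sym2.eq_iff.1 hde with ⟨rfl, rfl⟩ | ⟨rfl, rfl⟩
  · exact ⟨p, hp⟩
  · exact ⟨p.reverse, hp.isPath.reverse.isHamiltonian_of_mem (by simp [hp.mem_support])⟩

theorem IsHamiltonianCycle.three_le_card [Fintype V] {u : V} {c : G.Walk u u}
    (hc : c.IsHamiltonianCycle) : 3 ≤ Fintype.card V :=
  hc.length_eq ▸ hc.isCycle.three_le_length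

theorem IsHamiltonian.exists_isPathList_induce {H : SimpleGraph V} (hle : H ≤ G) {K : Set V}
    {x y : K} {p : (H.induce K).Walk x y} (hp : p.IsHamiltonian) :
    ∃ L, G.IsPathList L x y ∧ ∀ v, v ∈ L ↔ v ∈ K :=
  ⟨_, hp.isPath.isPathList.map ((Hom.ofLE hle).comp (Embedding.induce K).toHom)
    Subtype.val_injective, fun v => by simp [hp.mem_support]⟩

end Walk

theorem reachable_fromRel_of_rel {r : V → V → Prop} {x y : V} (h : r x y) :
    (fromRel r).Reachable x y := by
  by_cases hxy : x = y
  · exact hxy ▸ Reachable.refl _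
  · exact ((fromRel_adj _ _ _).2 ⟨hxy, Or.inl h⟩).reachable

end SimpleGraph

section Layers

variable {A : Type*} [AddCommGroup A] {Γ : SimpleGraph (A × Bool)} {σ : Bool} {β γ : A}
  {W : AddSubgroup A} {P : List (A × Bool)}

theorem SimpleGraph.IsPathList.exists_translate
    (hshift : ∀ t x y, Γ.Adj x y → Γ.Adj (x.1 + t, x.2) (y.1 + t, y.2))
    (hP : Γ.IsPathList P (0, σ) (β, σ)) (hPW : ∀ v, v ∈ P ↔ v.1 ∈ W)
    {x x' : A} (hx : x' - x = β ∨ x - x' = β) :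
    ∃ L, Γ.IsPathList L (x, σ) (x', σ) ∧ ∀ v, v ∈ L ↔ (v.1 : A ⧸ W) = x := by
  let τ (t : A) : Γ →g Γ := ⟨fun v => (v.1 + t, v.2), hshift t _ _⟩
  have hτ (t : A) : Function.Injective (τ t) := fun v w h => by simpa [τ, Prod.ext_iff] using h
  have hmem (t : A) (v : A × Bool) : v ∈ P.map (τ t) ↔ (v.1 : A ⧸ W) = t := by
    rw [QuotientAddGroup.eq_iff_sub_mem, List.mem_map]
    constructor
    · rintro ⟨w, hw, rfl⟩
      simpa [τ] using (hPW w).1 hw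
    · exact fun hv => ⟨(v.1 - t, v.2), (hPW _).2 hv, by simp [τ]⟩
  have hβ : (β : A ⧸ W) = 0 :=
    (QuotientAddGroup.eq_zero_iff β).2 ((hPW _).1 (List.mem_of_getLast? hP.getLast?_eq))
  rcases hx with hx | hx
  · obtain rfl : x' = β + x := eq_add_of_sub_eq hx
    exact ⟨_, by simpa [τ] using hP.map (τ x) (hτ x), hmem x⟩
  · obtain rfl : x = β + x' := eq_add_of_sub_eq hx
    refine ⟨_, by simpa [τ] using (hP.map (τ x') (hτ x')).reverse, fun v => ?_⟩
    rw [List.mem_reverse, QuotientAddGroup.mk_add, hβ, zero_add]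
    exact hmem x' v

theorem SimpleGraph.exists_isPathList_succ_layer
    (hshift : ∀ t x y, Γ.Adj x y → Γ.Adj (x.1 + t, x.2) (y.1 + t, y.2))
    (hspoke : ∀ h, Γ.Adj (h + γ, σ) (h, !σ))
    (hrung : ∀ x y, Γ.Adj (x, !σ) (y, !σ) → y - x = β ∨ x - y = β)
    (hP : Γ.IsPathList P (0, σ) (β, σ)) (hPW : ∀ v, v ∈ P ↔ v.1 ∈ W)
    {k : ℕ} (hk : k + 1 < addOrderOf (γ : A ⧸ W)) {C : List (A × Bool)} {x x' : A}
    (hC : Γ.IsPathList C (x, !σ) (x', !σ)) (hadj : Γ.Adj (x', !σ) (x, !σ))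
    (hx' : (x' : A ⧸ W) = k • (γ : A ⧸ W))
    (hCk : ∀ v, v ∈ C ↔ ∃ j ≤ k, (v.1 : A ⧸ W) = j • (γ : A ⧸ W)) :
    ∃ D y y', Γ.IsPathList D (y, !σ) (y', !σ) ∧ Γ.Adj (y', !σ) (y, !σ) ∧
      (y' : A ⧸ W) = (k + 1) • (γ : A ⧸ W) ∧
      ∀ v, v ∈ D ↔ ∃ j ≤ k + 1, (v.1 : A ⧸ W) = j • (γ : A ⧸ W) := by
  obtain ⟨L, hL, hLW⟩ := hP.exists_translate hshift hPW (x := x' + γ) (x' := x + γ)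
    (by simpa using hrung x' x hadj)
  have hLk (v : A × Bool) : v ∈ L ↔ (v.1 : A ⧸ W) = (k + 1) • (γ : A ⧸ W) := by
    rw [hLW, QuotientAddGroup.mk_add, hx', succ_nsmul]
  have hdisj : C.Disjoint L := fun v hvC hvL => by
    obtain ⟨j, hj, hvj⟩ := (hCk v).1 hvC
    have := nsmul_injOn_Iio_addOrderOf (Set.mem_Iio.2 (by omega)) (by simpa using hk)
      (hvj.symm.trans ((hLk v).1 hvL))
    omega
  obtain ⟨D, y, y', hD, hDadj, hy'L, hDv⟩ := hC.exists_splice hL rfl rfl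
    (fun v => by simp [hLW]) hdisj (hspoke x').symm (hspoke x)
  refine ⟨D, y, y', hD, hDadj, (hLk _).1 hy'L, fun v => ?_⟩
  rw [hDv, hCk, hLk]
  simp only [Nat.le_succ_iff, or_and_right, exists_or, exists_eq_left]

theorem SimpleGraph.exists_isHamiltonianCycle_of_layers [Fintype A] [DecidableEq A]
    (hshift : ∀ t x y, Γ.Adj x y → Γ.Adj (x.1 + t, x.2) (y.1 + t, y.2))
    (hspoke : ∀ h, Γ.Adj (h + γ, σ) (h, !σ))
    (hrung : ∀ x y, Γ.Adj (x, !σ) (y, !σ) → y - x = β ∨ x - y = β)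
    (hgen : ∀ z : A ⧸ W, z ∈ AddSubgroup.zmultiples (γ : A ⧸ W))
    (hcard : 3 ≤ Fintype.card (A × Bool))
    (hP : Γ.IsPathList P (0, σ) (β, σ)) (hPW : ∀ v, v ∈ P ↔ v.1 ∈ W)
    {C : List (A × Bool)} {u u' : A × Bool} (hC : Γ.IsPathList C u u') (hu : u.2 = !σ)
    (hu' : u'.2 = !σ) (hCadj : Γ.Adj u' u) (hCW : ∀ v, v ∈ C ↔ v.1 ∈ W) :
    ∃ a, ∃ p : Γ.Walk a a, p.IsHamiltonianCycle := by
  classical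
  obtain ⟨x, rfl⟩ : ∃ x, u = (x, !σ) := ⟨u.1, Prod.ext rfl hu⟩
  obtain ⟨x', rfl⟩ : ∃ x', u' = (x', !σ) := ⟨u'.1, Prod.ext rfl hu'⟩
  have hlayers : ∀ k < addOrderOf (γ : A ⧸ W), ∃ C x x', Γ.IsPathList C (x, !σ) (x', !σ) ∧
      Γ.Adj (x', !σ) (x, !σ) ∧ (x' : A ⧸ W) = k • (γ : A ⧸ W) ∧
      ∀ v, v ∈ C ↔ ∃ j ≤ k, (v.1 : A ⧸ W) = j • (γ : A ⧸ W) := by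
    intro k hk
    induction k with
    | zero =>
      refine ⟨C, x, x', hC, hCadj, ?_, fun v => by simp [hCW, QuotientAddGroup.eq_zero_iff]⟩
      simpa [QuotientAddGroup.eq_zero_iff] using (hCW _).1 (List.mem_of_getLast? hC.getLast?_eq)
    | succ k ih =>
      obtain ⟨C, x, x', hC, hadj, hx', hCk⟩ := ih (by omega)
      exact exists_isPathList_succ_layer hshift hspoke hrung hP hPW hk hC hadj hx' hCk
  obtain ⟨D, y, y', hD, hadj, -, hDv⟩ :=
    hlayers (addOrderOf (γ : A ⧸ W) - 1) (by have := addOrderOf_pos (γ : A ⧸ W); omega)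
  refine hD.exists_isHamiltonianCycle (fun v => (hDv v).2 ?_) hadj hcard
  obtain ⟨j, hj, hvj⟩ := Finset.mem_image.1 (mem_zmultiples_iff_mem_range_addOrderOf.1 (hgen v.1))
  exact ⟨j, by have := Finset.mem_range.1 hj; omega, hvj.symm⟩

end Layers

theorem AddSubgroup.mem_zmultiples_of_closure_insert_eq_top {A : Type*} [AddCommGroup A]
    {s : Set A} {c : A} (h : closure (insert c s) = ⊤) (z : A ⧸ closure s) :
    z ∈ zmultiples (c : A ⧸ closure s) := by
  obtain ⟨x, rfl⟩ := QuotientAddGroup.mk_surjective z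
  have hle : closure (insert c s) ≤
      (zmultiples (c : A ⧸ closure s)).comap (QuotientAddGroup.mk' _) := by
    rw [closure_le]
    rintro y (rfl | hy)
    · exact mem_zmultiples _
    · simp [(QuotientAddGroup.eq_zero_iff y).2 (subset_closure hy)]
  exact hle (h ▸ mem_top x)

theorem sub_eq_or_sub_eq_of_mem_pair {A : Type*} [AddCommGroup A] [DecidableEq A] {β x y : A}
    (h : y - x ∈ ({β, -β} : Finset A) ∨ x - y ∈ ({β, -β} : Finset A)) :
    y - x = β ∨ x - y = β := by
  simp only [Finset.mem_insert, Finset.mem_singleton] at h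
  rcases h with (h | h) | (h | h)
  · exact Or.inl h
  · exact Or.inr (by rw [← neg_sub, h, neg_neg])
  · exact Or.inr h
  · exact Or.inl (by rw [← neg_sub, h, neg_neg])

section Bicirculant

variable {m : ℕ} {R S T : Finset (ZMod m)}

theorem bicirculant_adj_add {x y : ZMod m × Bool} (h : (bicirculant m R S T).Adj x y)
    (t : ZMod m) : (bicirculant m R S T).Adj (x.1 + t, x.2) (y.1 + t, y.2) := by
  rw [bicirculant, fromRel_adj] at h ⊢
  exact ⟨fun he => h.1 (by simpa [Prod.ext_iff] using he), by simpa using h.2⟩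

theorem bicirculant_adj_spoke {s : ZMod m} (hs : s ∈ S) (i : ZMod m) :
    (bicirculant m R S T).Adj (i, false) (i + s, true) := by
  simp [bicirculant, hs]

theorem bicirculant_adj_false_false {x y : ZMod m}
    (h : (bicirculant m R S T).Adj (x, false) (y, false)) : y - x ∈ R ∨ x - y ∈ R := by
  simpa [bicirculant] using h.2

theorem bicirculant_adj_true_true {x y : ZMod m}
    (h : (bicirculant m R S T).Adj (x, true) (y, true)) : y - x ∈ T ∨ x - y ∈ T := by
  simpa [bicirculant] using h.2

theorem bicirculant_mono {S' : Finset (ZMod m)} (h : S ⊆ S') :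
    bicirculant m R S T ≤ bicirculant m R S' T := by
  intro x y hxy
  rw [bicirculant, fromRel_adj] at hxy ⊢
  exact ⟨hxy.1, by rcases hxy.2 with (h' | h' | h') | (h' | h' | h') <;> grind⟩

theorem bicirculant_reachable_add {x y : ZMod m × Bool} (h : (bicirculant m R S T).Reachable x y)
    (t : ZMod m) : (bicirculant m R S T).Reachable (x.1 + t, x.2) (y.1 + t, y.2) :=
  h.map (⟨fun v => (v.1 + t, v.2), fun h => bicirculant_adj_add h t⟩ :
    bicirculant m R S T →g bicirculant m R S T)

theorem sub_mem_closure_of_bicirculant_reachable {x y : ZMod m × Bool}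
    (h : (bicirculant m R S T).Reachable x y) :
    y.1 - x.1 ∈ AddSubgroup.closure (↑(R ∪ S ∪ T) : Set (ZMod m)) := by
  have hmem (z : ZMod m) (hz : z ∈ R ∨ z ∈ S ∨ z ∈ T) :
      z ∈ AddSubgroup.closure (↑(R ∪ S ∪ T) : Set (ZMod m)) :=
    AddSubgroup.subset_closure <| by
      simp only [Finset.coe_union, Set.mem_union, SetLike.mem_coe]; tauto
  replace h := (reachable_iff_reflTransGen x y).1 h
  induction h with
  | refl => simp
  | tail _ hyz ih =>
    rw [← sub_add_sub_cancel]
    refine add_mem ?_ ih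
    rw [bicirculant, fromRel_adj] at hyz
    rcases hyz.2 with h' | h'
    · exact hmem _ (by tauto)
    · rw [← neg_sub]
      exact neg_mem (hmem _ (by tauto))

theorem bicirculant_reachable_zero_iff (hS : 0 ∈ S) (v : ZMod m × Bool) :
    (bicirculant m R S T).Reachable (0, false) v ↔
      v.1 ∈ AddSubgroup.closure (↑(R ∪ S ∪ T) : Set (ZMod m)) := by
  refine ⟨fun h => by simpa using sub_mem_closure_of_bicirculant_reachable h, fun hv => ?_⟩
  have hvert (i : ZMod m) : (bicirculant m R S T).Reachable (i, false) (i, true) :=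
    reachable_fromRel_of_rel (by simp [hS])
  have hout : ∀ i ∈ AddSubgroup.closure (↑(R ∪ S ∪ T) : Set (ZMod m)),
      (bicirculant m R S T).Reachable (0, false) (i, false) := by
    intro i hi
    induction hi using AddSubgroup.closure_induction with
    | mem z hz =>
      simp only [Finset.coe_union, Set.mem_union, Finset.mem_coe] at hz
      rcases hz with (hz | hz) | hz
      · exact reachable_fromRel_of_rel (by simp [hz])
      · exact (reachable_fromRel_of_rel (by simp [hz])).trans (hvert z).symm
      · exact ((hvert 0).trans (reachable_fromRel_of_rel (by simp [hz]))).trans (hvert z).symm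
    | zero => rfl
    | add x y _ _ hx hy => exact hx.trans (by simpa [add_comm] using bicirculant_reachable_add hy x)
    | neg x _ hx => simpa using (bicirculant_reachable_add hx (-x)).symm
  obtain ⟨i, _ | _⟩ := v
  · exact hout i hv
  · exact (hout i hv).trans (hvert i)

theorem mem_supp_bicirculant_iff (hS : 0 ∈ S) (v : ZMod m × Bool) :
    v ∈ ((bicirculant m R S T).connectedComponentMk (0, false)).supp ↔
      v.1 ∈ AddSubgroup.closure (↑(R ∪ S ∪ T) : Set (ZMod m)) := by
  rw [ConnectedComponent.mem_supp_iff, ConnectedComponent.eq, reachable_comm]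
  exact bicirculant_reachable_zero_iff hS v

theorem mem_zmultiples_of_bicirculant_connected {c : ZMod m} (hS : 0 ∈ S)
    (h : (bicirculant m R (insert c S) T).Connected)
    (z : ZMod m ⧸ AddSubgroup.closure (↑(R ∪ S ∪ T) : Set (ZMod m))) :
    z ∈ AddSubgroup.zmultiples
      (c : ZMod m ⧸ AddSubgroup.closure (↑(R ∪ S ∪ T) : Set (ZMod m))) := by
  refine AddSubgroup.mem_zmultiples_of_closure_insert_eq_top (eq_top_iff.2 fun i _ => ?_) z
  have hi := (bicirculant_reachable_zero_iff (Finset.mem_insert_of_mem hS) (i, false)).1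
    (h.preconnected _ _)
  rwa [show R ∪ insert c S ∪ T = insert c (R ∪ S ∪ T) by ext; simp,
    Finset.coe_insert] at hi

end Bicirculant

theorem twoHooked_construction_general
    (m : ℕ) [NeZero m] (a b c : ZMod m) (S' : Finset (ZMod m))
    (hS'0 : (0 : ZMod m) ∈ S')
    (hconn : (bicirculant m {a, -a} (insert c S') {b, -b}).Connected)
    (K : Set (ZMod m × Bool))
    (hK : K = ((bicirculant m {a, -a} S' {b, -b}).connectedComponentMk
      ((0 : ZMod m), false)).supp)
    (hcycle : ∃ (x : K)
        (p : ((bicirculant m {a, -a} S' {b, -b}).induce K).Walk x x),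
      p.IsHamiltonianCycle ∧
      (∃ y z : K, s(y, z) ∈ p.edges ∧ y.1.2 = false ∧ z.1.2 = false) ∧
      (∃ y z : K, s(y, z) ∈ p.edges ∧ y.1.2 = true ∧ z.1.2 = true))
    (hpath :
      (∃ (h₀ : ((0 : ZMod m), false) ∈ K) (h₁ : ((b : ZMod m), false) ∈ K)
          (p : ((bicirculant m {a, -a} S' {b, -b}).induce K).Walk
            ⟨((0 : ZMod m), false), h₀⟩ ⟨(b, false), h₁⟩),
        p.IsHamiltonian) ∨
      (∃ (h₀ : ((0 : ZMod m), true) ∈ K) (h₁ : ((a : ZMod m), true) ∈ K)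
          (p : ((bicirculant m {a, -a} S' {b, -b}).induce K).Walk
            ⟨((0 : ZMod m), true), h₀⟩ ⟨(a, true), h₁⟩),
        p.IsHamiltonian)) :
    (bicirculant m {a, -a} (insert c S') {b, -b}).IsHamiltonian := by
  set W := AddSubgroup.closure (↑({a, -a} ∪ S' ∪ {b, -b}) : Set (ZMod m))
  have hle := bicirculant_mono (R := {a, -a}) (T := {b, -b}) (Finset.subset_insert c S')
  have hKW (v : ZMod m × Bool) : v ∈ K ↔ v.1 ∈ W := hK ▸ mem_supp_bicirculant_iff hS'0 v
  have hgen := mem_zmultiples_of_bicirculant_connected hS'0 hconn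
  obtain ⟨x, p, hp, ⟨y, z, hyz, hy, hz⟩, ⟨y', z', hyz', hy', hz'⟩⟩ := hcycle
  have hcard : 3 ≤ Fintype.card (ZMod m × Bool) :=
    hp.three_le_card.trans (Fintype.card_le_of_injective _ Subtype.val_injective)
  intro _
  rcases hpath with ⟨h₀, h₁, q, hq⟩ | ⟨h₀, h₁, q, hq⟩
  · obtain ⟨P, hP, hPK⟩ := hq.exists_isPathList_induce hle
    obtain ⟨r, hr⟩ := hp.exists_isHamiltonian_of_mem_edges hyz'
    obtain ⟨C, hC, hCK⟩ := hr.exists_isPathList_induce hle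
    refine exists_isHamiltonianCycle_of_layers (σ := false) (γ := -c) (W := W)
      (fun t _ _ h => bicirculant_adj_add h t) (fun h => ?_)
      (fun x y h => sub_eq_or_sub_eq_of_mem_pair (bicirculant_adj_true_true h))
      (fun z => by rw [QuotientAddGroup.mk_neg, AddSubgroup.zmultiples_neg]; exact hgen z) hcard
      hP (by simpa [hKW] using hPK) hC hz' hy' (hle (p.adj_of_mem_edges hyz'))
      (by simpa [hKW] using hCK)
    simpa using bicirculant_adj_spoke (R := {a, -a}) (T := {b, -b}) (Finset.mem_insert_self c S')
      (h + -c)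
  · obtain ⟨P, hP, hPK⟩ := hq.exists_isPathList_induce hle
    obtain ⟨r, hr⟩ := hp.exists_isHamiltonian_of_mem_edges hyz
    obtain ⟨C, hC, hCK⟩ := hr.exists_isPathList_induce hle
    exact exists_isHamiltonianCycle_of_layers (σ := true) (γ := c) (W := W)
      (fun t _ _ h => bicirculant_adj_add h t)
      (fun h => (bicirculant_adj_spoke (Finset.mem_insert_self c S') h).symm)
      (fun x y h => sub_eq_or_sub_eq_of_mem_pair (bicirculant_adj_false_false h)) hgen hcard
      hP (by simpa [hKW] using hPK) hC hz hy (hle (p.adj_of_mem_edges hyz))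
      (by simpa [hKW] using hCK)

/-- The 2-hooked construction: if the connected component of `u₀` in
`G' = B(m; {a, -a}, S', {b, -b})` has a hamiltonian cycle containing at least one outer edge
and at least one inner edge, and a hamiltonian path from `u₀` to `u_b` or from `v₀` to `v_a`,
then the connected graph `G = B(m; {a, -a}, S' ∪ {c}, {b, -b})` (with
`gcd(m, S' ∪ {c}) > 1` and `gcd(m, {a} ∪ S' ∪ {b}) > 1`) is hamiltonian. -/
theorem twoHooked_construction
    (m : ℕ) [NeZero m] (a b c : ZMod m) (S' : Finset (ZMod m))
    (ha : a ≠ 0) (hb : b ≠ 0) (hS'0 : (0 : ZMod m) ∈ S') (hc : c ∉ S')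
    (hconn : (bicirculant m {a, -a} (insert c S') {b, -b}).Connected)
    (hgcd1 : 1 < gcdSet m (insert c S'))
    (hgcd2 : 1 < gcdSet m (insert a (insert b S')))
    (K : Set (ZMod m × Bool))
    (hK : K = ((bicirculant m {a, -a} S' {b, -b}).connectedComponentMk
      ((0 : ZMod m), false)).supp)
    (hcycle : ∃ (x : K)
        (p : ((bicirculant m {a, -a} S' {b, -b}).induce K).Walk x x),
      p.IsHamiltonianCycle ∧
      (∃ y z : K, s(y, z) ∈ p.edges ∧ y.1.2 = false ∧ z.1.2 = false) ∧
      (∃ y z : K, s(y, z) ∈ p.edges ∧ y.1.2 = true ∧ z.1.2 = true))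
    (hpath :
      (∃ (h₀ : ((0 : ZMod m), false) ∈ K) (h₁ : ((b : ZMod m), false) ∈ K)
          (p : ((bicirculant m {a, -a} S' {b, -b}).induce K).Walk
            ⟨((0 : ZMod m), false), h₀⟩ ⟨(b, false), h₁⟩),
        p.IsHamiltonian) ∨
      (∃ (h₀ : ((0 : ZMod m), true) ∈ K) (h₁ : ((a : ZMod m), true) ∈ K)
          (p : ((bicirculant m {a, -a} S' {b, -b}).induce K).Walk
            ⟨((0 : ZMod m), true), h₀⟩ ⟨(a, true), h₁⟩),
        p.IsHamiltonian)) :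
    (bicirculant m {a, -a} (insert c S') {b, -b}).IsHamiltonian :=
  twoHooked_construction_general m a b c S' hS'0 hconn K hK hcycle hpath
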